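/- arXiv:1101.2218 — 6 statements merged into one kernel-verified Lean document; each statement's English description precedes it below -/
import Mathlib

section
/- Let X be a normed space over ℝ or ℂ, T ∈ B(X), and S ∈ B(X). Suppose the set E of vectors x for which Sx ∈ {0} ∪ {T^n x : n ≥ 0} is not contained in a countable union of nowhere dense subsets of X. Then S = 0 or S = T^n for some n ≥ 0. -/
/-!
The set in question lies in `ker S ∪ ⋃ₙ ker (S - Tⁿ)`. A closed subspace with nonempty interior
is the whole space, so the kernel of a nonzero operator is nowhere dense; if `S` were neither `0`
nor any `Tⁿ`, the set would be a countable union of nowhere dense sets.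
-/

open Set Filter Topology

theorem Submodule.isNowhereDense_of_ne_top {R M : Type*} [Ring R] [TopologicalSpace R]
    [TopologicalSpace M] [AddCommGroup M] [ContinuousAdd M] [Module R M] [ContinuousSMul R M]
    [NeBot (𝓝[{x : R | IsUnit x}] 0)] (s : Submodule R M) (hclosed : IsClosed (s : Set M))
    (hs : s ≠ ⊤) : IsNowhereDense (s : Set M) :=
  hclosed.isNowhereDense_iff.mpr <|
    not_nonempty_iff_eq_empty.mp fun hint ↦ hs (s.eq_top_of_nonempty_interior' hint)

theorem ContinuousLinearMap.isMeagre_ker {R M M₂ : Type*} [Ring R] [TopologicalSpace R]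
    [TopologicalSpace M] [AddCommGroup M] [ContinuousAdd M] [Module R M] [ContinuousSMul R M]
    [TopologicalSpace M₂] [AddCommGroup M₂] [Module R M₂] [T1Space M₂]
    [NeBot (𝓝[{x : R | IsUnit x}] 0)] (f : M →L[R] M₂) (hf : f ≠ 0) :
    IsMeagre (LinearMap.ker (f : M →ₗ[R] M₂) : Set M) :=
  (Submodule.isNowhereDense_of_ne_top _ f.isClosed_ker fun htop ↦
    hf (ContinuousLinearMap.coe_injective (LinearMap.ker_eq_top.mp htop))).isMeagre

theorem stmt_2 {𝕜 : Type*} [RCLike 𝕜] {X : Type*} [NormedAddCommGroup X] [NormedSpace 𝕜 X]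
    (T S : X →L[𝕜] X)
    (h : ¬ IsMeagre {x : X | S x = 0 ∨ ∃ n : ℕ, S x = (T ^ n) x}) :
    S = 0 ∨ ∃ n : ℕ, S = T ^ n := by
  by_contra! hS
  obtain ⟨hS_ne_zero, hS_ne_pow⟩ := hS
  refine h <| ((S.isMeagre_ker hS_ne_zero).union <| isMeagre_iUnion fun n ↦
    (S - T ^ n).isMeagre_ker (sub_ne_zero.mpr (hS_ne_pow n))).mono ?_
  rintro x (hx | ⟨n, hx⟩)
  · exact Or.inl hx
  · refine Or.inr <| mem_iUnion.mpr ⟨n, ?_⟩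
    simp only [SetLike.mem_coe, LinearMap.mem_ker, ContinuousLinearMap.coe_coe, sub_apply, hx,
      sub_self]
end

section
/- Let X be a normed space over ℝ or ℂ and T ∈ B(X) such that ⋂ₙ closure(Tⁿ(X)) = {0}. If x ∈ X, k < n are nonnegative integers, and T^n x = T^k x ≠ 0, then a contradiction follows; i.e., for every x and k < n, T^n x = T^k x implies T^k x = 0. -/
/-! If `T^n x = T^k x` with `k < n`, then `T^k x` is a periodic point of `T`, and a periodic point
lies in the range of every power of `T`; so `T^k x ∈ ⋂ₙ closure (Tⁿ⁺¹(X)) = {0}`. -/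

namespace Function

variable {α : Type*} {f : α → α}

theorem iterate_mem_periodicPts_of_iterate_eq {x : α} {k n : ℕ} (hkn : k < n)
    (h : f^[n] x = f^[k] x) : f^[k] x ∈ periodicPts f :=
  ⟨n - k, Nat.sub_pos_of_lt hkn, by
    rw [IsPeriodicPt, IsFixedPt, ← iterate_add_apply, Nat.sub_add_cancel hkn.le, h]⟩

theorem periodicPts_subset_range_iterate (m : ℕ) : periodicPts f ⊆ Set.range f^[m] :=
  fun _ ⟨p, hp, hx⟩ => periodicPts_subset_range ⟨p, hp, hx.iterate m⟩

end Function

theorem stmt_6 {𝕜 : Type*} [RCLike 𝕜] {X : Type*} [NormedAddCommGroup X] [NormedSpace 𝕜 X]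
    (T : X →L[𝕜] X)
    (h : (⋂ n : ℕ, closure (Set.range (⇑(T ^ (n + 1))))) = {0}) :
    ∀ (x : X) (k n : ℕ), k < n → (T ^ n) x = (T ^ k) x → (T ^ k) x = 0 := by
  intro x k n hkn hx
  simp only [FunLike.coe_pow_eq_iterate] at hx ⊢
  have hper := Function.iterate_mem_periodicPts_of_iterate_eq hkn hx
  have hmem : T^[k] x ∈ ⋂ j : ℕ, closure (Set.range (⇑(T ^ (j + 1)))) :=
    Set.mem_iInter.2 fun j => subset_closure <| by
      rw [FunLike.coe_pow_eq_iterate]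
      exact Function.periodicPts_subset_range_iterate _ hper
  rwa [h] at hmem
end

section
/- Let A be a bounded operator on a Hilbert space with A^n → 0 in the weak operator topology, and let y be a vector, s ≥ 0 an integer with A^s y ≠ 0. If (n_k) is a sequence of nonnegative integers with A^{n_k} y → A^s y in norm, then n_k = s for all sufficiently large k. -/
/-!
Weak convergence `Aⁿ → 0` rules out nonzero periodic points of `A`, so the orbit `m ↦ Aᵐ y` takes
the value `Aˢ y` only at `m = s`. Pairing with `Aˢ y`, the inner products `⟪Aᵐ y, Aˢ y⟫` tend to `0`,
whereas along `n k` they tend to `‖Aˢ y‖² ≠ 0`; hence `n k` is eventually bounded. A bounded sequence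
of indices whose orbit points converge to `Aˢ y` must then eventually equal `s`, since the finitely
many other orbit points below the bound stay away from `Aˢ y`.
-/

open Filter Topology

theorem exists_eventually_lt_of_tendsto_comp {X ι : Type*} [TopologicalSpace X] [T2Space X]
    {g : ℕ → X} {a b : X} (hab : a ≠ b) (hg : Tendsto g atTop (𝓝 a))
    {l : Filter ι} {n : ι → ℕ} (hgn : Tendsto (g ∘ n) l (𝓝 b)) :
    ∃ N, ∀ᶠ k in l, n k < N := by
  obtain ⟨U, hU, V, hV, hUV⟩ := Filter.disjoint_iff.mp (disjoint_nhds_nhds.mpr hab)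
  obtain ⟨N, hN⟩ := eventually_atTop.mp (hg hU)
  refine ⟨N, ?_⟩
  filter_upwards [hgn hV] with k hk
  by_contra! hNk
  exact hUV.ne_of_mem (hN _ hNk) hk rfl

theorem eventually_eq_of_tendsto_comp {X ι : Type*} [TopologicalSpace X] [T1Space X]
    {f : ℕ → X} {s : ℕ} (hf : ∀ m ≠ s, f m ≠ f s)
    {l : Filter ι} {n : ι → ℕ} (hbdd : ∃ N, ∀ᶠ k in l, n k < N)
    (hfn : Tendsto (f ∘ n) l (𝓝 (f s))) :
    ∀ᶠ k in l, n k = s := by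
  obtain ⟨N, hN⟩ := hbdd
  have hsep : ∀ᶠ k in l, ∀ m ∈ Finset.range N, m ≠ s → f (n k) ≠ f m :=
    (eventually_all_finset _).mpr fun m _ => by
      by_cases hm : m = s
      · exact Eventually.of_forall fun _ h => absurd hm h
      · filter_upwards [hfn.eventually_ne (hf m hm).symm] with k hk _ using hk
  filter_upwards [hN, hsep] with k hk hk'
  by_contra hks
  exact hk' (n k) (Finset.mem_range.mpr hk) hks rfl

section WeakPowersToZero

variable {𝕜 E : Type*} [RCLike 𝕜] [NormedAddCommGroup E] [InnerProductSpace 𝕜 E]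

theorem eq_zero_of_pow_apply_eq_self {A : E →L[𝕜] E} {x : E}
    (hA : Tendsto (fun n : ℕ => inner 𝕜 ((A ^ n) x) x) atTop (𝓝 0))
    {d : ℕ} (hd : 0 < d) (hx : (A ^ d) x = x) : x = 0 := by
  have hperiodic : ∀ j : ℕ, (A ^ (d * j)) x = x := by
    intro j
    induction j with
    | zero => simp
    | succ j ih => rw [Nat.mul_succ, pow_add, mul_apply_eq_comp, hx, ih]
  have hsub : Tendsto (fun j : ℕ => inner 𝕜 ((A ^ (d * j)) x) x) atTop (𝓝 0) :=
    hA.comp (tendsto_id.const_mul_atTop' hd)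
  simp only [hperiodic, tendsto_const_nhds_iff] at hsub
  exact inner_self_eq_zero.mp hsub

theorem pow_apply_eq_zero_of_pow_apply_eq {A : E →L[𝕜] E}
    (hA : ∀ x y : E, Tendsto (fun n : ℕ => inner 𝕜 ((A ^ n) x) y) atTop (𝓝 0))
    {y : E} {m s : ℕ} (hms : m ≠ s) (h : (A ^ m) y = (A ^ s) y) : (A ^ s) y = 0 := by
  wlog hlt : m < s generalizing m s
  · rw [← h]
    exact this hms.symm h.symm (by omega)
  have hfix : (A ^ (s - m)) ((A ^ m) y) = (A ^ m) y := by
    rw [← mul_apply_eq_comp, ← pow_add, Nat.sub_add_cancel hlt.le, h]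
  rw [← h]
  exact eq_zero_of_pow_apply_eq_self (hA _ _) (Nat.sub_pos_of_lt hlt) hfix

end WeakPowersToZero

theorem stmt_10_general {H : Type*} [NormedAddCommGroup H] [InnerProductSpace ℂ H]
    (A : H →L[ℂ] H)
    (hWOT : ∀ x y : H,
      Filter.Tendsto (fun n : ℕ => (inner ℂ ((A ^ n) x) y : ℂ)) Filter.atTop (nhds 0))
    (y : H) (s : ℕ) (hs : (A ^ s) y ≠ 0)
    (n : ℕ → ℕ)
    (hconv : Filter.Tendsto (fun k : ℕ => (A ^ n k) y) Filter.atTop (nhds ((A ^ s) y))) :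
    ∀ᶠ k in Filter.atTop, n k = s := by
  have hbdd : ∃ N, ∀ᶠ k in atTop, n k < N :=
    exists_eventually_lt_of_tendsto_comp (inner_self_ne_zero.mpr hs).symm (hWOT y ((A ^ s) y))
      (hconv.inner tendsto_const_nhds)
  exact eventually_eq_of_tendsto_comp (f := fun m => (A ^ m) y)
    (fun m hm h => hs (pow_apply_eq_zero_of_pow_apply_eq hWOT hm h)) hbdd hconv

theorem stmt_10 {H : Type*} [NormedAddCommGroup H] [InnerProductSpace ℂ H] [CompleteSpace H]
    (A : H →L[ℂ] H)
    (hWOT : ∀ x y : H,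
      Filter.Tendsto (fun n : ℕ => (inner ℂ ((A ^ n) x) y : ℂ)) Filter.atTop (nhds 0))
    (y : H) (s : ℕ) (hs : (A ^ s) y ≠ 0)
    (n : ℕ → ℕ)
    (hconv : Filter.Tendsto (fun k : ℕ => (A ^ n k) y) Filter.atTop (nhds ((A ^ s) y))) :
    ∀ᶠ k in Filter.atTop, n k = s :=
  stmt_10_general A hWOT y s hs n hconv
end

section
/- Let X be a real or complex normed space and T ∈ B(X) such that M = ⋃_{n≥1} ker(Tⁿ) is dense in X. If S ∈ B(X) satisfies Sx ∈ closure({0} ∪ {T^n x : n ≥ 0}) for every x ∈ X, then S = 0 or S = T^k for some k ≥ 0. -/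
/-!
On a vector `x` with `T ^ N x = 0` the null orbit `{0} ∪ {T ^ n x}` is the finite set
`{x, T x, …, T ^ N x}`, hence closed, so `S x = T ^ n x` for some `n ≤ N`. Applying this to
`x + t • y` for infinitely many scalars `t` and pigeonholing the exponents gives a single `c`
with `S x = T ^ c x` and `S y = T ^ c y`. The exponent of a nonzero value `T ^ c x` is unique
for such `x`, so once `S y₀ ≠ 0` for one nilpotent vector `y₀`, one exponent `k` serves all of
them. Density of the nilpotent vectors then extends `S = 0` or `S = T ^ k` to all of `X`.
-/

namespace ContinuousLinearMap

section Semiring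

variable {R X : Type*} [Semiring R] [TopologicalSpace X] [AddCommMonoid X] [Module R X]
  (T : X →L[R] X) {x : X} {N : ℕ}

theorem pow_apply_eq_zero_of_le (hN : (T ^ N) x = 0) {n : ℕ} (hn : N ≤ n) : (T ^ n) x = 0 := by
  obtain ⟨m, rfl⟩ := Nat.exists_eq_add_of_le hn
  rw [add_comm, pow_add, mul_apply_eq_comp, hN, map_zero]

theorem eq_of_pow_apply_eq (hN : (T ^ N) x = 0) {a b : ℕ} (hab : (T ^ a) x = (T ^ b) x)
    (ha : (T ^ a) x ≠ 0) : a = b := by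
  suffices key : ∀ a b : ℕ, a < b → (T ^ a) x = (T ^ b) x → (T ^ a) x = 0 by
    rcases lt_trichotomy a b with h | h | h
    · exact absurd (key a b h hab) ha
    · exact h
    · exact absurd (key b a h hab.symm) (hab ▸ ha)
  intro a b hlt heq
  -- `T ^ (b - a)` fixes `T ^ a x`, so does its `N`-th power, which kills it.
  have hfix : Function.IsFixedPt ⇑(T ^ (b - a)) ((T ^ a) x) := by
    rw [Function.IsFixedPt, ← mul_apply_eq_comp, ← pow_add, Nat.sub_add_cancel hlt.le, ← heq]
  have hiter := hfix.iterate N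
  rw [← FunLike.coe_pow_eq_iterate, ← pow_mul, Function.IsFixedPt, ← mul_apply_eq_comp,
    ← pow_add] at hiter
  rw [← hiter]
  exact T.pow_apply_eq_zero_of_le hN
    ((Nat.le_mul_of_pos_left N (Nat.sub_pos_of_lt hlt)).trans (Nat.le_add_right _ _))

theorem null_orbit_subset_image_Iic (hN : (T ^ N) x = 0) :
    {0} ∪ {y : X | ∃ n : ℕ, y = (T ^ n) x} ⊆ (fun n => (T ^ n) x) '' Set.Iic N := by
  rintro y (rfl | ⟨n, rfl⟩)
  · exact ⟨N, Set.self_mem_Iic, hN⟩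
  · rcases le_total n N with hn | hn
    · exact ⟨n, hn, rfl⟩
    · exact ⟨N, Set.self_mem_Iic, hN.trans (T.pow_apply_eq_zero_of_le hN hn).symm⟩

theorem exists_pow_apply_of_mem_closure_null_orbit [T1Space X] (hN : (T ^ N) x = 0) {y : X}
    (hy : y ∈ closure ({0} ∪ {y : X | ∃ n : ℕ, y = (T ^ n) x})) :
    ∃ n ≤ N, y = (T ^ n) x := by
  obtain ⟨n, hn, rfl⟩ := closure_minimal (T.null_orbit_subset_image_Iic hN)
    ((Set.finite_Iic N).image _).isClosed hy
  exact ⟨n, hn, rfl⟩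

end Semiring

section DivisionRing

variable {𝕜 X : Type*} [DivisionRing 𝕜] [CharZero 𝕜] [TopologicalSpace X] [AddCommGroup X]
  [Module 𝕜 X] {T S : X →L[𝕜] X}

theorem exists_common_pow_of_forall_exists_pow
    (hS : ∀ (x : X) (N : ℕ), (T ^ N) x = 0 → ∃ n ≤ N, S x = (T ^ n) x)
    {x y : X} {N : ℕ} (hx : (T ^ N) x = 0) (hy : (T ^ N) y = 0) :
    ∃ c : ℕ, S x = (T ^ c) x ∧ S y = (T ^ c) y := by
  have hxy : ∀ t : ℕ, (T ^ N) (x + (t : 𝕜) • y) = 0 := fun t => by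
    rw [map_add, map_smul, hx, hy, smul_zero, add_zero]
  choose c hcN hc using fun t : ℕ => hS _ N (hxy t)
  obtain ⟨s, -, t, -, hst, hcst⟩ := Set.infinite_univ.exists_ne_map_eq_of_mapsTo
    (fun t _ => Set.mem_Iic.mpr (hcN t)) (Set.finite_Iic N)
  refine ⟨c t, ?_⟩
  set D : X →ₗ[𝕜] X := (S : X →ₗ[𝕜] X) - (T ^ c t : X →L[𝕜] X)
  have hD : ∀ u : ℕ, c u = c t → D x + (u : 𝕜) • D y = 0 := fun u hu => by
    rw [← map_smul, ← map_add, LinearMap.sub_apply, coe_coe, coe_coe, sub_eq_zero, ← hu]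
    exact hc u
  have hDy : D y = 0 := by
    have hsub := congrArg₂ (· - ·) (hD s hcst) (hD t rfl)
    simp only [add_sub_add_left_eq_sub, ← sub_smul, sub_zero] at hsub
    exact (smul_eq_zero.mp hsub).resolve_left (sub_ne_zero.mpr (Nat.cast_injective.ne hst))
  have hDx : D x = 0 := by simpa [hDy] using hD t rfl
  exact ⟨sub_eq_zero.mp hDx, sub_eq_zero.mp hDy⟩

theorem eq_zero_or_exists_eq_pow_of_forall_exists_pow
    (hS : ∀ (x : X) (N : ℕ), (T ^ N) x = 0 → ∃ n ≤ N, S x = (T ^ n) x) :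
    (∀ (x : X) (N : ℕ), (T ^ N) x = 0 → S x = 0) ∨
      ∃ k : ℕ, ∀ (x : X) (N : ℕ), (T ^ N) x = 0 → S x = (T ^ k) x := by
  by_cases hzero : ∀ (x : X) (N : ℕ), (T ^ N) x = 0 → S x = 0
  · exact .inl hzero
  push Not at hzero
  obtain ⟨y, Ny, hy, hSy⟩ := hzero
  obtain ⟨k, -, hk⟩ := hS y Ny hy
  refine .inr ⟨k, fun x Nx hx => ?_⟩
  obtain ⟨c, hcx, hcy⟩ := exists_common_pow_of_forall_exists_pow hS
    (T.pow_apply_eq_zero_of_le hx (le_max_left Nx Ny))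
    (T.pow_apply_eq_zero_of_le hy (le_max_right Nx Ny))
  have hck : c = k := T.eq_of_pow_apply_eq hy (hcy.symm.trans hk) (hcy ▸ hSy)
  rw [hcx, hck]

end DivisionRing

end ContinuousLinearMap

theorem stmt_12 {𝕜 : Type*} [RCLike 𝕜] {X : Type*} [NormedAddCommGroup X] [NormedSpace 𝕜 X]
    (T S : X →L[𝕜] X)
    (hdense : Dense (⋃ n : ℕ, {x : X | (T ^ (n + 1)) x = 0}))
    (hS : ∀ x : X, S x ∈ closure ({0} ∪ {y : X | ∃ n : ℕ, y = (T ^ n) x})) :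
    S = 0 ∨ ∃ k : ℕ, S = T ^ k := by
  have hlocal : ∀ (x : X) (N : ℕ), (T ^ N) x = 0 → ∃ n ≤ N, S x = (T ^ n) x :=
    fun x _ hN => T.exists_pow_apply_of_mem_closure_null_orbit hN (hS x)
  have hext : ∀ R : X →L[𝕜] X, (∀ (x : X) (N : ℕ), (T ^ N) x = 0 → S x = R x) → S = R :=
    fun R hR => DFunLike.coe_injective <| Continuous.ext_on hdense S.continuous R.continuous
      fun x hx => by
        obtain ⟨n, hn⟩ := Set.mem_iUnion.mp hx
        exact hR x (n + 1) hn
  rcases ContinuousLinearMap.eq_zero_or_exists_eq_pow_of_forall_exists_pow hlocal with hzero | ⟨k, hk⟩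
  · exact .inl (hext 0 fun x N hN => hzero x N hN)
  · exact .inr ⟨k, hext _ hk⟩
end

section
/- Let X be a normed space and T ∈ B(X) a bounded operator such that for every x ∈ X either T^n x → 0 weakly or ‖T^n x‖ → ∞. Then for every x ∈ X, the set {0} ∪ {T^n x : n ≥ 0} is norm closed. -/
/-!
A point of the closure of a range `{u n}` that is not itself some `u n` is a cluster point of
`u` along the cofinite filter. If `‖u n‖ → ∞` there are no cluster points; if `u n → 0` weakly,
every cluster point `y` has `f y = 0` for all continuous functionals `f`, so `y = 0` by
Hahn–Banach. Either way the closure of the orbit adds at most `0`.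
-/

open Filter Set Topology

theorem isClosed_union_range_of_mapClusterPt_mem {ι X : Type*} [TopologicalSpace X] [T1Space X]
    {u : ι → X} {s : Set X} (hs : IsClosed s) (h : ∀ y, MapClusterPt y cofinite u → y ∈ s) :
    IsClosed (s ∪ range u) := by
  refine closure_subset_iff_isClosed.mp ?_
  rw [closure_union, hs.closure_eq]
  refine union_subset subset_union_left fun y hy => ?_
  by_cases hyu : y ∈ range u
  · exact Or.inr hyu
  refine Or.inl (h y (mapClusterPt_iff_frequently.mpr fun U hU => ?_))
  rw [frequently_cofinite_iff_infinite]
  intro hfin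
  have hV : U \ u '' {i | u i ∈ U} ∈ 𝓝 y :=
    sdiff_mem hU ((hfin.image u).isClosed.compl_mem_nhds fun ⟨i, _, hi⟩ => hyu ⟨i, hi⟩)
  obtain ⟨_, ⟨hiU, hnew⟩, i, rfl⟩ := mem_closure_iff_nhds.mp hy _ hV
  exact hnew ⟨i, hiU, rfl⟩

theorem not_mapClusterPt_of_tendsto_norm_atTop {α E : Type*} [SeminormedAddCommGroup E]
    {F : Filter α} {u : α → E} (hu : Tendsto (fun i => ‖u i‖) F atTop) (y : E) :
    ¬MapClusterPt y F u := fun hy =>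
  have hlt : ∃ᶠ i in F, ‖u i‖ < ‖y‖ + 1 :=
    (hy.tendsto_comp continuous_norm.continuousAt).frequently (gt_mem_nhds (lt_add_one _))
  let ⟨_, hi_lt, hi_ge⟩ := (hlt.and_eventually (hu.eventually_ge_atTop (‖y‖ + 1))).exists
  hi_lt.not_ge hi_ge

theorem eq_zero_of_mapClusterPt_of_forall_dual_tendsto_zero {α R V : Type*} [Ring R]
    [TopologicalSpace R] [T2Space R] [AddCommGroup V] [TopologicalSpace V] [Module R V]
    [SeparatingDual R V] {F : Filter α} {u : α → V}
    (hu : ∀ f : StrongDual R V, Tendsto (fun i => f (u i)) F (𝓝 0)) {y : V}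
    (hy : MapClusterPt y F u) : y = 0 :=
  SeparatingDual.eq_zero_of_forall_dual_eq_zero (R := R) fun f =>
    eq_of_nhds_neBot <| (hy.tendsto_comp f.continuous.continuousAt).neBot.mono
      (inf_le_inf_left _ (hu f))

theorem stmt_13 {𝕜 : Type*} [RCLike 𝕜] {X : Type*} [NormedAddCommGroup X] [NormedSpace 𝕜 X]
    (T : X →L[𝕜] X)
    (h : ∀ x : X,
      (∀ f : X →L[𝕜] 𝕜,
        Filter.Tendsto (fun n : ℕ => f ((T ^ n) x)) Filter.atTop (nhds 0)) ∨
      Filter.Tendsto (fun n : ℕ => ‖(T ^ n) x‖) Filter.atTop Filter.atTop) :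
    ∀ x : X, IsClosed ({0} ∪ {y : X | ∃ n : ℕ, y = (T ^ n) x}) := by
  intro x
  have hrange : {y : X | ∃ n : ℕ, y = (T ^ n) x} = range fun n => (T ^ n) x := by
    ext y; exact exists_congr fun _ => eq_comm
  rw [hrange]
  refine isClosed_union_range_of_mapClusterPt_mem isClosed_singleton fun y hy => ?_
  rw [Nat.cofinite_eq_atTop] at hy
  rcases h x with hweak | hnorm
  · exact eq_zero_of_mapClusterPt_of_forall_dual_tendsto_zero hweak hy
  · exact absurd hy (not_mapClusterPt_of_tendsto_norm_atTop hnorm y)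
end

section
/- Let N be a normal operator on a complex Hilbert space H and S ∈ B(H) such that for every x ∈ H, Sx lies in the norm closure of {0} ∪ {N^n x : n ≥ 0}. Then S commutes with N. -/
/-!
Call `x` generic if `S x` is neither `0` nor a point `N ^ m x` of the orbit of `x`. Generic vectors
are dense by Baire's theorem: they avoid the countably many proper closed subspaces `ker S` and
`ker (S - N ^ m)`. Fix a generic `x`. For all but countably many small `t`, `S ((1 + tN) x)` is a
cluster point of the orbit of `(1 + tN) x`, so `f t := (1 + tN)⁻¹ S (1 + tN) x` is a cluster point
of the orbit of `x`. Since `N` is normal, the norms `‖N ^ n x‖` are log-convex, so they converge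
once they have a cluster point, and all cluster points of the orbit have the same norm. The
holomorphic function `f` therefore has constant norm `‖f 0‖ = ‖S x‖` near `0`. By the maximum
modulus principle `f` is constant, and `f t = S x` for some `t ≠ 0` gives `S (N x) = N (S x)`.
-/

open Filter Topology Set Metric ContinuousLinearMap

theorem mapClusterPt_atTop_of_mem_closure_range {X : Type*} [TopologicalSpace X] [T1Space X]
    {u : ℕ → X} {a : X} (ha : a ∈ closure (range u)) (hau : a ∉ range u) :
    MapClusterPt a atTop u := by
  rw [mapClusterPt_atTop_iff_forall_mem_closure]
  intro i
  rw [← image_univ, ← Iio_union_Ici (a := i), image_union, closure_union,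
    ((finite_Iio i).image u).isClosed.closure_eq] at ha
  exact ha.resolve_left fun h => hau (image_subset_range _ _ h)

theorem Monotone.tendsto_of_mapClusterPt {r : ℕ → ℝ} (hr : Monotone r) {c : ℝ}
    (hc : MapClusterPt c atTop r) : Tendsto r atTop (𝓝 c) := by
  rcases tendsto_atTop_of_monotone hr with htop | ⟨l, hl⟩
  · obtain ⟨n, hlt, hge⟩ := ((hc.frequently (gt_mem_nhds (lt_add_one c))).and_eventually
      (htop.eventually_ge_atTop (c + 1))).exists
    exact absurd hge (not_le.mpr hlt)
  · rwa [eq_of_nhds_neBot (hc.clusterPt.mono hl)]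

theorem Antitone.tendsto_of_mapClusterPt {r : ℕ → ℝ} (hr : Antitone r) {c : ℝ}
    (hc : MapClusterPt c atTop r) : Tendsto r atTop (𝓝 c) := by
  simpa using
    (hr.neg.tendsto_of_mapClusterPt (hc.continuousAt_comp continuous_neg.continuousAt)).neg

theorem tendsto_of_mapClusterPt_of_sq_le_mul {r : ℕ → ℝ} (h0 : ∀ n, 0 ≤ r n)
    (hr : ∀ n, r (n + 1) ^ 2 ≤ r n * r (n + 2)) {c : ℝ} (hc : MapClusterPt c atTop r) :
    Tendsto r atTop (𝓝 c) := by
  have hstep : ∀ n, r n ≤ r (n + 1) → r (n + 1) ≤ r (n + 2) := by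
    intro n hn
    rcases (h0 (n + 1)).eq_or_lt with h | h
    · rw [← h]; exact h0 _
    · nlinarith [hr n, h0 (n + 2)]
  by_cases hinc : ∃ K, r K ≤ r (K + 1)
  · obtain ⟨K, hK⟩ := hinc
    have hmono : Monotone fun n => r (n + K) := monotone_nat_of_le_succ fun n => by
      induction n with
      | zero => simpa [add_comm] using hK
      | succ n ih => simpa [add_right_comm] using hstep _ (by simpa [add_right_comm] using ih)
    rw [← tendsto_add_atTop_iff_nat K]
    refine hmono.tendsto_of_mapClusterPt ?_
    exact mapClusterPt_comp.mpr (by rwa [map_add_atTop_eq_nat])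
  · push Not at hinc
    exact (antitone_nat_of_succ_le fun n => (hinc n).le).tendsto_of_mapClusterPt hc

theorem Set.subsingleton_setOf_add_smul_eq {K E : Type*} [Field K] [AddCommGroup E] [Module K E]
    {a b c d : E} (hac : a ≠ c) : {t : K | a + t • b = c + t • d}.Subsingleton := by
  intro t ht s hs
  by_contra hts
  have hbd : (t - s) • (b - d) = 0 := by
    calc (t - s) • (b - d) = (a + t • b) - (a + s • b) - ((c + t • d) - (c + s • d)) := by module
      _ = 0 := by rw [ht, hs]; abel
  rw [smul_eq_zero, sub_eq_zero, sub_eq_zero] at hbd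
  rcases hbd with hts' | rfl
  · exact hts hts'
  · exact hac (add_right_cancel ht)

theorem ContinuousLinearMap.dense_setOf_apply_ne_zero {𝕜 E F : Type*} [NontriviallyNormedField 𝕜]
    [NormedAddCommGroup E] [NormedSpace 𝕜 E] [NormedAddCommGroup F] [NormedSpace 𝕜 F]
    {T : E →L[𝕜] F} (hT : T ≠ 0) : Dense {x | T x ≠ 0} := by
  change Dense (LinearMap.ker (T : E →ₗ[𝕜] F) : Set E)ᶜ
  rw [← interior_eq_empty_iff_dense_compl, ← not_nonempty_iff_eq_empty]
  intro h
  apply hT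
  exact coe_injective (LinearMap.ker_eq_top.mp ((LinearMap.ker _).eq_top_of_nonempty_interior' h))

theorem dense_setOf_forall_apply_ne_zero {𝕜 E F : Type*} [NontriviallyNormedField 𝕜]
    [NormedAddCommGroup E] [NormedSpace 𝕜 E] [CompleteSpace E] [NormedAddCommGroup F]
    [NormedSpace 𝕜 F] {s : Set (E →L[𝕜] F)} (hs : s.Countable) (h0 : 0 ∉ s) :
    Dense {x | ∀ T ∈ s, T x ≠ 0} := by
  convert dense_biInter_of_isOpen (fun T _ => isOpen_ne_fun T.continuous continuous_const) hs
    fun T hT => dense_setOf_apply_ne_zero (ne_of_mem_of_not_mem hT h0) using 1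
  ext
  simp

theorem Complex.eqOn_of_norm_eq_off_countable {F : Type*} [NormedAddCommGroup F]
    [NormedSpace ℂ F] [StrictConvexSpace ℝ F] {f : ℂ → F} {U s : Set ℂ} {c : ℂ}
    (hU : IsPreconnected U) (hUo : IsOpen U) (hc : c ∈ U) (hs : s.Countable)
    (hf : DifferentiableOn ℂ f U) (hnorm : ∀ t ∈ U \ s, ‖f t‖ = ‖f c‖) :
    EqOn f (fun _ => f c) U := by
  have hclosure : U ⊆ closure (U \ s) := by
    simpa only [sdiff_eq, inter_comm] using (hs.dense_compl ℝ).open_subset_closure_inter hUo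
  have hnormU : EqOn (‖f ·‖) (fun _ => ‖f c‖) U :=
    EqOn.of_subset_closure hnorm hf.continuousOn.norm continuousOn_const sdiff_subset hclosure
  exact Complex.eqOn_of_isPreconnected_of_isMaxOn_norm hU hUo hf hc fun t ht => (hnormU ht).le

section NormedSpace

variable {𝕜 E : Type*} [NontriviallyNormedField 𝕜] [NormedAddCommGroup E] [NormedSpace 𝕜 E]

def nullOrbit (T : E →L[𝕜] E) (x : E) : Set E := insert 0 (range fun n => (T ^ n) x)

theorem mapClusterPt_pow_apply_of_isUnit {T A : E →L[𝕜] E} (hA : IsUnit A) (hAT : Commute A T)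
    {x z : E} (hz : MapClusterPt z atTop fun n => (T ^ n) (A x)) :
    MapClusterPt (Ring.inverse A z) atTop fun n => (T ^ n) x := by
  have horbit : ∀ n, Ring.inverse A ((T ^ n) (A x)) = (T ^ n) x := fun n => by
    rw [← mul_apply_eq_comp (T ^ n), ← (hAT.pow_right n).eq, mul_apply_eq_comp,
      ← mul_apply_eq_comp (Ring.inverse A), Ring.inverse_mul_cancel _ hA, one_apply_eq_self]
  simpa only [Function.comp_def, horbit] using
    hz.continuousAt_comp (Ring.inverse A).continuous.continuousAt

theorem countable_setOf_apply_add_smul_mem_nullOrbit {S T : E →L[𝕜] E} {x : E}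
    (hx : S x ∉ nullOrbit T x) :
    {t : 𝕜 | S (x + t • T x) ∈ nullOrbit T (x + t • T x)}.Countable := by
  have hline : ∀ a b : E, S x ≠ a → {t : 𝕜 | S x + t • S (T x) = a + t • b}.Countable :=
    fun a b h => (subsingleton_setOf_add_smul_eq h).countable
  simp only [nullOrbit, mem_insert_iff, mem_range, not_or, not_exists] at hx
  refine ((hline 0 0 hx.1).union (countable_iUnion fun n =>
    hline ((T ^ n) x) ((T ^ n) (T x)) fun h => hx.2 n h.symm)).mono ?_
  intro t ht
  simp only [nullOrbit, mem_insert_iff, mem_range, map_add, map_smul] at ht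
  rcases ht with h | ⟨n, h⟩
  · left; simpa using h
  · right; exact mem_iUnion.mpr ⟨n, h.symm⟩

theorem dense_setOf_apply_notMem_nullOrbit [CompleteSpace E] {S T : E →L[𝕜] E} (hS0 : S ≠ 0)
    (hpow : ∀ m, S ≠ T ^ m) : Dense {x | S x ∉ nullOrbit T x} := by
  refine (dense_setOf_forall_apply_ne_zero ((countable_range fun n => S - T ^ n).insert S)
    ?_).mono ?_
  · simp [sub_eq_zero, hpow, Ne.symm hS0]
  · intro x hx
    simp only [mem_ofPred_eq, nullOrbit, mem_insert_iff, mem_range, not_or, not_exists]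
    refine ⟨hx S (mem_insert _ _), fun n h => hx _ (mem_insert_of_mem _ ⟨n, rfl⟩) ?_⟩
    rw [sub_apply, h, sub_self]

end NormedSpace

section InnerProductSpace

variable {𝕜 H : Type*} [RCLike 𝕜] [NormedAddCommGroup H] [InnerProductSpace 𝕜 H] [CompleteSpace H]
  {T : H →L[𝕜] H}

theorem IsStarNormal.norm_apply_sq_le_mul (hT : IsStarNormal T) (v : H) :
    ‖T v‖ ^ 2 ≤ ‖v‖ * ‖T (T v)‖ := by
  rw [apply_norm_sq_eq_inner_adjoint_right]
  calc RCLike.re (inner 𝕜 v ((adjoint T ∘L T) v)) ≤ ‖inner 𝕜 v (adjoint T (T v))‖ :=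
        RCLike.re_le_norm _
    _ ≤ ‖v‖ * ‖adjoint T (T v)‖ := norm_inner_le_norm _ _
    _ = ‖v‖ * ‖T (T v)‖ := by rw [← isStarNormal_iff_norm_eq_adjoint.mp hT]

theorem IsStarNormal.tendsto_norm_pow_apply_of_mapClusterPt (hT : IsStarNormal T) {x y : H}
    (hy : MapClusterPt y atTop fun n => (T ^ n) x) :
    Tendsto (fun n => ‖(T ^ n) x‖) atTop (𝓝 ‖y‖) := by
  refine tendsto_of_mapClusterPt_of_sq_le_mul (fun n => norm_nonneg _) (fun n => ?_)
    (hy.continuousAt_comp continuous_norm.continuousAt)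
  simpa only [pow_succ' T, mul_apply_eq_comp] using hT.norm_apply_sq_le_mul ((T ^ n) x)

theorem IsStarNormal.norm_eq_of_mapClusterPt (hT : IsStarNormal T) {x y z : H}
    (hy : MapClusterPt y atTop fun n => (T ^ n) x)
    (hz : MapClusterPt z atTop fun n => (T ^ n) x) : ‖y‖ = ‖z‖ :=
  tendsto_nhds_unique (hT.tendsto_norm_pow_apply_of_mapClusterPt hy)
    (hT.tendsto_norm_pow_apply_of_mapClusterPt hz)

end InnerProductSpace

section Commutant

variable {H : Type*} [NormedAddCommGroup H] [InnerProductSpace ℂ H] [CompleteSpace H]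
  {N S : H →L[ℂ] H}

theorem IsStarNormal.apply_comm_of_apply_notMem_nullOrbit (hN : IsStarNormal N)
    (hS : ∀ v, S v ∈ closure (nullOrbit N v)) {x : H} (hx : S x ∉ nullOrbit N x) :
    S (N x) = N (S x) := by
  set A : ℂ → H →L[ℂ] H := fun t => 1 + t • N
  have hAx : ∀ t v, A t v = v + t • N v := fun t v => by simp [A]
  obtain ⟨ε, hε, hunit⟩ : ∃ ε > 0, ball (0 : ℂ) ε ⊆ {t | IsUnit (A t)} :=
    Metric.isOpen_iff.mp (Units.isOpen.preimage (by fun_prop)) 0 (by simp [A])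
  set f : ℂ → H := fun t => Ring.inverse (A t) (S (A t x)) with hfdef
  have hf : DifferentiableOn ℂ f (ball 0 ε) := fun t ht =>
    (((differentiableAt_inverse (hunit ht)).comp t (by fun_prop)).clm_apply
      (by fun_prop)).differentiableWithinAt
  set exceptional := {t : ℂ | S (x + t • N x) ∈ nullOrbit N (x + t • N x)}
  have hcluster :
      ∀ t ∈ ball (0 : ℂ) ε \ exceptional, MapClusterPt (f t) atTop fun n => (N ^ n) x := by
    rintro t ⟨ht, hgood⟩
    have hmem := hS (A t x)
    rw [nullOrbit, insert_eq, closure_union, closure_singleton, mem_union,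
      mem_singleton_iff] at hmem
    rw [mem_ofPred_eq, ← hAx, nullOrbit, mem_insert_iff, not_or] at hgood
    exact mapClusterPt_pow_apply_of_isUnit (hunit ht)
      ((Commute.one_left N).add_left ((Commute.refl N).smul_left t))
      (mapClusterPt_atTop_of_mem_closure_range (hmem.resolve_left hgood.1) hgood.2)
  have hf0 : f 0 = S x := by simp [f, A]
  have h0 : (0 : ℂ) ∈ ball (0 : ℂ) ε \ exceptional :=
    ⟨mem_ball_self hε, by simpa [exceptional] using hx⟩
  have : StrictConvexSpace ℝ H := by
    let := InnerProductSpace.rclikeToReal ℂ H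
    infer_instance
  have hconst := Complex.eqOn_of_norm_eq_off_countable (convex_ball 0 ε).isPreconnected
    isOpen_ball (mem_ball_self hε) (countable_setOf_apply_add_smul_mem_nullOrbit hx) hf
    fun t ht => hN.norm_eq_of_mapClusterPt (hcluster t ht) (hcluster 0 h0)
  set t : ℂ := ((ε / 2 : ℝ) : ℂ)
  have ht : t ∈ ball (0 : ℂ) ε := by
    rw [mem_ball_zero_iff, Complex.norm_real, Real.norm_of_nonneg (by positivity)]
    linarith
  have hinv : A t (f t) = S (A t x) := by
    rw [hfdef, ← mul_apply_eq_comp, Ring.mul_inverse_cancel _ (hunit ht), one_apply_eq_self]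
  have h := congrArg (A t) ((hconst ht).trans hf0)
  rw [hinv, hAx, hAx, map_add, map_smul, add_right_inj] at h
  exact smul_right_injective H (by simp [t, hε.ne']) h

end Commutant

theorem stmt_15 {H : Type*} [NormedAddCommGroup H] [InnerProductSpace ℂ H] [CompleteSpace H]
    (N S : H →L[ℂ] H) (hN : IsStarNormal N)
    (hS : ∀ x : H, S x ∈ closure ({0} ∪ {y : H | ∃ n : ℕ, y = (N ^ n) x})) :
    S * N = N * S := by
  by_cases hS0 : S = 0
  · simp [hS0]
  by_cases hpow : ∃ m, S = N ^ m
  · obtain ⟨m, rfl⟩ := hpow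
    exact ((Commute.refl N).pow_left m).eq
  push Not at hpow
  have hS' : ∀ v, S v ∈ closure (nullOrbit N v) := fun v => by
    convert hS v using 2
    ext
    simp [nullOrbit, eq_comm]
  have hcomm := Continuous.ext_on (dense_setOf_apply_notMem_nullOrbit hS0 hpow)
    (S * N).continuous (N * S).continuous fun x hx => hN.apply_comm_of_apply_notMem_nullOrbit hS' hx
  exact DFunLike.coe_injective hcomm
end
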